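/- For every positive integer N there exist integers s and t such that there are at least N distinct triples (u, v, w) of integers with u ≥ v ≥ w ≥ 0 and some c > 5u satisfying s = c² − (u² + v² + w²) and t = c⁴ − c²(u² + v² + w²) + (u²v² + u²w² + v²w²), all with the same value of c. -/

import Mathlib

/-!
For `a ≥ b ≥ 0` the triple `(u, v, w) = (a + b, a, b)` has `u² + v² + w² = 2n` and
`u²v² + u²w² + v²w² = n²`, where `n = a² + ab + b²`; so `(s, t)` depends only on `c` and `n`,
and `c = 5n + 1 > 5u` serves every such triple at once. It remains to represent one `n` by
`a² + ab + b²` in at least `N` ways. Viewing `(x, y)` as `x + yζ` with `ζ` a primitive sixth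
root of unity, `7 ^ i (3 + 5ζ) ^ j` with `i + j = N` all have norm `49 ^ N`; moving them into the
fundamental domain `a ≥ b ≥ 0` by units and conjugation keeps the gcd of the coordinates, whose
`7`-adic valuation is exactly `i` because `7` does not divide `(3 + 5ζ) ^ j`.
-/

open Finset

instance fact_prime_seven : Fact (Nat.Prime 7) := ⟨by norm_num⟩

def eisensteinNorm (v : ℤ × ℤ) : ℤ := v.1 ^ 2 + v.1 * v.2 + v.2 ^ 2

lemma eisensteinNorm_smul (k : ℤ) (v : ℤ × ℤ) :
    eisensteinNorm (k • v) = k ^ 2 * eisensteinNorm v := by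
  simp only [eisensteinNorm, Prod.smul_fst, Prod.smul_snd, smul_eq_mul]
  ring

lemma add_le_eisensteinNorm {a b : ℤ} (ha : 0 ≤ a) (hb : 0 ≤ b) :
    a + b ≤ eisensteinNorm (a, b) := by
  simp only [eisensteinNorm]
  nlinarith [Int.le_self_sq a, Int.le_self_sq b, mul_nonneg ha hb]

/-- `(3 + 5ζ) ^ j` in the basis `1, ζ`, where `ζ² = ζ - 1`. -/
def eisensteinPow : ℕ → ℤ × ℤ
  | 0 => (1, 0)
  | j + 1 => (3 * (eisensteinPow j).1 - 5 * (eisensteinPow j).2,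
      5 * (eisensteinPow j).1 + 8 * (eisensteinPow j).2)

lemma eisensteinNorm_eisensteinPow (j : ℕ) : eisensteinNorm (eisensteinPow j) = 49 ^ j := by
  induction j with
  | zero => simp [eisensteinNorm, eisensteinPow]
  | succ j ih =>
    simp only [eisensteinNorm, eisensteinPow] at ih ⊢
    linear_combination 49 * ih

/-- The ring map `ℤ[ζ] → ZMod 7`, `ζ ↦ 3`, sends `3 + 5ζ` to `4`. -/
lemma eisensteinPow_cast_zmod_seven (j : ℕ) :
    ((eisensteinPow j).1 + 3 * (eisensteinPow j).2 : ZMod 7) = 4 ^ j := by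
  induction j with
  | zero => simp [eisensteinPow]
  | succ j ih =>
    have h7 : (7 : ZMod 7) = 0 := rfl
    simp only [eisensteinPow]
    push_cast
    linear_combination 4 * ih + (2 * ((eisensteinPow j).1 : ZMod 7) + (eisensteinPow j).2) * h7

lemma not_seven_dvd_gcd_eisensteinPow (j : ℕ) :
    ¬ 7 ∣ Int.gcd (eisensteinPow j).1 (eisensteinPow j).2 := by
  intro h
  have h7 : ((7 : ℕ) : ℤ) ∣ _ := Int.natCast_dvd_natCast.2 h
  have hx := (ZMod.intCast_zmod_eq_zero_iff_dvd _ 7).2 (h7.trans (Int.gcd_dvd_left _ _))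
  have hy := (ZMod.intCast_zmod_eq_zero_iff_dvd _ 7).2 (h7.trans (Int.gcd_dvd_right _ _))
  have hcast := eisensteinPow_cast_zmod_seven j
  rw [hx, hy, mul_zero, add_zero] at hcast
  exact pow_ne_zero j (by decide : (4 : ZMod 7) ≠ 0) hcast.symm

lemma padicValNat_gcd_pow_smul {p : ℕ} [Fact p.Prime] {v : ℤ × ℤ} (hv : ¬ p ∣ Int.gcd v.1 v.2)
    (i : ℕ) : padicValNat p (Int.gcd ((p : ℤ) ^ i • v).1 ((p : ℤ) ^ i • v).2) = i := by
  have hv0 : Int.gcd v.1 v.2 ≠ 0 := by rintro h; exact hv (h ▸ dvd_zero p)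
  simp only [Prod.smul_fst, Prod.smul_snd, smul_eq_mul, Int.gcd_mul_left, Int.natAbs_pow,
    Int.natAbs_natCast]
  rw [padicValNat.mul (pow_ne_zero i (Fact.out : p.Prime).ne_zero) hv0,
    padicValNat.prime_pow, padicValNat.eq_zero_of_not_dvd hv, add_zero]

lemma exists_nonneg_rep (v : ℤ × ℤ) : ∃ w : ℤ × ℤ, 0 ≤ w.1 ∧ 0 ≤ w.2 ∧
    eisensteinNorm w = eisensteinNorm v ∧ Int.gcd w.1 w.2 = Int.gcd v.1 v.2 := by
  obtain ⟨x, y⟩ := v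
  wlog hx : 0 ≤ x generalizing x y with H
  · obtain ⟨w, hw1, hw2, hnorm, hgcd⟩ := H (-x) (-y) (by linarith)
    refine ⟨w, hw1, hw2, ?_, ?_⟩
    · rw [hnorm]; simp only [eisensteinNorm]; ring
    · simpa only [Int.gcd_neg, Int.neg_gcd] using hgcd
  rcases le_or_gt 0 y with hy | hy
  · exact ⟨(x, y), hx, hy, rfl, rfl⟩
  rcases le_or_gt 0 (x + y) with hxy | hxy
  · refine ⟨(x + y, -y), hxy, by linarith, by simp only [eisensteinNorm]; ring, ?_⟩
    simp only [Int.gcd_neg, Int.gcd_add_self_left]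
  · refine ⟨(x, -(x + y)), hx, by linarith, by simp only [eisensteinNorm]; ring, ?_⟩
    simp only [Int.gcd_neg, Int.gcd_self_add_right]

lemma exists_reduced_rep (v : ℤ × ℤ) : ∃ w : ℤ × ℤ, 0 ≤ w.2 ∧ w.2 ≤ w.1 ∧
    eisensteinNorm w = eisensteinNorm v ∧ Int.gcd w.1 w.2 = Int.gcd v.1 v.2 := by
  obtain ⟨⟨a, b⟩, ha, hb, hnorm, hgcd⟩ := exists_nonneg_rep v
  rcases le_total b a with hba | hab
  · exact ⟨(a, b), hb, hba, hnorm, hgcd⟩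
  · refine ⟨(b, a), ha, hab, ?_, by rw [← hgcd, Int.gcd_comm]⟩
    rw [← hnorm]; simp only [eisensteinNorm]; ring

lemma exists_many_reduced_reps (N : ℕ) : ∃ n : ℤ, ∃ S : Finset (ℤ × ℤ), N ≤ S.card ∧
    ∀ w ∈ S, 0 ≤ w.2 ∧ w.2 ≤ w.1 ∧ eisensteinNorm w = n := by
  choose reduce hreduce using exists_reduced_rep
  let rep (ij : ℕ × ℕ) : ℤ × ℤ := reduce ((7 : ℤ) ^ ij.1 • eisensteinPow ij.2)
  have hval (ij : ℕ × ℕ) : padicValNat 7 (Int.gcd (rep ij).1 (rep ij).2) = ij.1 := by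
    rw [(hreduce _).2.2.2]
    exact_mod_cast padicValNat_gcd_pow_smul (not_seven_dvd_gcd_eisensteinPow ij.2) ij.1
  refine ⟨49 ^ N, (antidiagonal N).image rep, ?_, ?_⟩
  · rw [card_image_of_injOn, Nat.card_antidiagonal]
    · exact N.le_succ
    intro ij hij kl hkl heq
    have hi : ij.1 = kl.1 := by rw [← hval ij, ← hval kl, heq]
    rw [mem_coe, HasAntidiagonal.mem_antidiagonal] at hij hkl
    exact Prod.ext hi (by omega)
  · simp only [mem_image, HasAntidiagonal.mem_antidiagonal]
    rintro _ ⟨ij, hij, rfl⟩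
    obtain ⟨hb, hba, hnorm, -⟩ := hreduce ((7 : ℤ) ^ ij.1 • eisensteinPow ij.2)
    refine ⟨hb, hba, ?_⟩
    rw [hnorm, eisensteinNorm_smul, eisensteinNorm_eisensteinPow, ← hij, pow_add,
      ← pow_mul, mul_comm ij.1, pow_mul]
    norm_num

theorem stmt16_general (N : ℕ) :
    ∃ s t c : ℤ, ∃ S : Finset (ℤ × ℤ × ℤ),
      N ≤ S.card ∧ ∀ p ∈ S,
        p.1 ≥ p.2.1 ∧ p.2.1 ≥ p.2.2 ∧ p.2.2 ≥ 0 ∧ c > 5 * p.1 ∧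
        s = c ^ 2 - (p.1 ^ 2 + p.2.1 ^ 2 + p.2.2 ^ 2) ∧
        t = c ^ 4 - c ^ 2 * (p.1 ^ 2 + p.2.1 ^ 2 + p.2.2 ^ 2) +
          (p.1 ^ 2 * p.2.1 ^ 2 + p.1 ^ 2 * p.2.2 ^ 2 + p.2.1 ^ 2 * p.2.2 ^ 2) := by
  obtain ⟨n, S, hcard, hS⟩ := exists_many_reduced_reps N
  set c := 5 * n + 1
  have htriple : Function.Injective fun w : ℤ × ℤ => (w.1 + w.2, w.1, w.2) :=
    fun w w' h => by simp only [Prod.mk.injEq] at h; exact Prod.ext h.2.1 h.2.2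
  refine ⟨c ^ 2 - 2 * n, c ^ 4 - c ^ 2 * (2 * n) + n ^ 2, c, S.image _,
    by rwa [card_image_of_injective S htriple], ?_⟩
  simp only [mem_image]
  rintro _ ⟨⟨a, b⟩, hab, rfl⟩
  obtain ⟨hb, hba, hn⟩ := hS _ hab
  have hsq : (a + b) ^ 2 + a ^ 2 + b ^ 2 = 2 * n := by rw [← hn, eisensteinNorm]; ring
  have hsqmul : (a + b) ^ 2 * a ^ 2 + (a + b) ^ 2 * b ^ 2 + a ^ 2 * b ^ 2 = n ^ 2 := by
    rw [← hn, eisensteinNorm]; ring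
  have hc : c > 5 * (a + b) := by linarith [hn ▸ add_le_eisensteinNorm (hb.trans hba) hb]
  exact ⟨by linarith, hba, hb, hc, by rw [hsq], by rw [hsq, hsqmul]⟩

/-- The numerical heart of Proposition 5.3: for every `N` there are Chern
classes `(s, t)` realized, with a single `c > 5u`, by at least `N` distinct
parameter triples `(u, v, w)` with `u ≥ v ≥ w ≥ 0`. -/
theorem stmt16 (N : ℕ) (hN : 0 < N) :
    ∃ s t c : ℤ, ∃ S : Finset (ℤ × ℤ × ℤ),
      N ≤ S.card ∧ ∀ p ∈ S,
        p.1 ≥ p.2.1 ∧ p.2.1 ≥ p.2.2 ∧ p.2.2 ≥ 0 ∧ c > 5 * p.1 ∧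
        s = c ^ 2 - (p.1 ^ 2 + p.2.1 ^ 2 + p.2.2 ^ 2) ∧
        t = c ^ 4 - c ^ 2 * (p.1 ^ 2 + p.2.1 ^ 2 + p.2.2 ^ 2) +
          (p.1 ^ 2 * p.2.1 ^ 2 + p.1 ^ 2 * p.2.2 ^ 2 + p.2.1 ^ 2 * p.2.2 ^ 2) :=
  stmt16_general N
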